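/- Let 0 < μ < ν < 1 and set q := (1+ν)/(ν−μ), and for λ ∈ (0,1) let A_λ := diag(1, …, 1, −λ). Let F ⊂ ℝ^{n−1} be an open set, h > 0, and let v be a C¹ map from F × (−h, 0) to ℝⁿ. For x ∈ F × (0, h/ν) define v̂(x) := q·A_μ v(A_μ x) + (1−q)·A_ν v(A_ν x). Then for every p ∈ [1, ∞) there exists a constant c > 0, depending only on μ, ν and p, such that ∫_{F × (0, h/ν)} ‖e(v̂)(x)‖_F^p dx ≤ c ∫_{F × (−h, 0)} ‖e(v)(x)‖_F^p dx. -/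

import Mathlib

open Matrix MeasureTheory
open scoped ENNReal

/-- The diagonal matrix `A_λ = diag(1, …, 1, −λ)` on `ℝ^{n+1}`. -/
noncomputable def Adiag (n : ℕ) (lam : ℝ) : Matrix (Fin (n + 1)) (Fin (n + 1)) ℝ :=
  Matrix.diagonal fun i => if i = Fin.last n then -lam else 1

/-- The symmetric part `(M + Mᵀ)/2` of a square matrix. -/
noncomputable def symPart {N : ℕ} (M : Matrix (Fin N) (Fin N) ℝ) :
    Matrix (Fin N) (Fin N) ℝ :=
  (1 / 2 : ℝ) • (M + Mᵀ)

/-- The Frobenius norm of a square matrix. -/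
noncomputable def frobNorm {N : ℕ} (M : Matrix (Fin N) (Fin N) ℝ) : ℝ :=
  Real.sqrt (∑ i, ∑ j, (M i j) ^ 2)

noncomputable def toEuc {N : ℕ} (M : Matrix (Fin N) (Fin N) ℝ) :
    EuclideanSpace ℝ (Fin N × Fin N) := WithLp.toLp 2 (fun ij : Fin N × Fin N => M ij.1 ij.2)

lemma frobNorm_eq {N : ℕ} (M : Matrix (Fin N) (Fin N) ℝ) : frobNorm M = ‖toEuc M‖ := by
  rw [EuclideanSpace.norm_eq, frobNorm]
  congr 1
  rw [Fintype.sum_prod_type]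
  simp [toEuc, sq_abs, Real.norm_eq_abs]

lemma frobNorm_nonneg {N : ℕ} (M : Matrix (Fin N) (Fin N) ℝ) : 0 ≤ frobNorm M :=
  Real.sqrt_nonneg _

lemma frobNorm_add_le {N : ℕ} (M M' : Matrix (Fin N) (Fin N) ℝ) :
    frobNorm (M + M') ≤ frobNorm M + frobNorm M' := by
  have : toEuc (M + M') = toEuc M + toEuc M' := by ext ij; simp [toEuc]
  rw [frobNorm_eq, frobNorm_eq, frobNorm_eq, this]
  exact norm_add_le _ _

lemma frobNorm_smul {N : ℕ} (c : ℝ) (M : Matrix (Fin N) (Fin N) ℝ) :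
    frobNorm (c • M) = |c| * frobNorm M := by
  have : toEuc (c • M) = c • toEuc M := by ext ij; simp [toEuc]
  rw [frobNorm_eq, frobNorm_eq, this, norm_smul, Real.norm_eq_abs]

lemma Adiag_transpose (n : ℕ) (lam : ℝ) : (Adiag n lam)ᵀ = Adiag n lam :=
  Matrix.diagonal_transpose _

lemma symPart_conj {N : ℕ} (A M : Matrix (Fin N) (Fin N) ℝ) (hA : Aᵀ = A) :
    symPart (A * M * A) = A * symPart M * A := by
  simp only [symPart, Matrix.transpose_mul, hA, Matrix.smul_mul, Matrix.mul_smul,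
    Matrix.mul_add, Matrix.add_mul, Matrix.mul_assoc]

lemma symPart_combo {N : ℕ} (a b : ℝ) (M M' : Matrix (Fin N) (Fin N) ℝ) :
    symPart (a • M + b • M') = a • symPart M + b • symPart M' := by
  simp only [symPart, Matrix.transpose_add, Matrix.transpose_smul, smul_add, smul_smul]
  module

lemma frobNorm_conj_le (n : ℕ) (lam : ℝ) (h0 : 0 ≤ lam) (h1 : lam ≤ 1)
    (M : Matrix (Fin (n+1)) (Fin (n+1)) ℝ) :
    frobNorm (Adiag n lam * M * Adiag n lam) ≤ frobNorm M := by
  apply Real.sqrt_le_sqrt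
  apply Finset.sum_le_sum
  intro i _
  apply Finset.sum_le_sum
  intro j _
  have hd : ∀ k : Fin (n+1), |(fun i => if i = Fin.last n then -lam else 1) k| ≤ 1 := by
    intro k; dsimp only; split
    · rwa [abs_neg, abs_of_nonneg h0]
    · simp
  rw [Adiag, Matrix.mul_diagonal, Matrix.diagonal_mul]
  have hsq : ∀ k : Fin (n+1), ((fun i => if i = Fin.last n then -lam else 1) k) ^ 2 ≤ 1 := by
    intro k
    rw [sq_le_one_iff_abs_le_one]
    exact hd k
  nlinarith [hsq i, hsq j, sq_nonneg (M i j),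
    sq_nonneg ((fun i => if i = Fin.last n then -lam else 1) i * M i j),
    sq_nonneg ((fun i => if i = Fin.last n then -lam else 1) j)]

lemma matrix_eq_of_mulVec_eq {N : ℕ} {M M' : Matrix (Fin N) (Fin N) ℝ}
    (h : ∀ z, M.mulVec z = M'.mulVec z) : M = M' := by
  ext i j
  have := congrFun (h (Pi.single j 1)) i
  simpa [Matrix.mulVec_single_one] using this

lemma key_rpow {p K s a b : ℝ} (hp : 0 ≤ p) (hK : 0 ≤ K) (ha : 0 ≤ a) (hb : 0 ≤ b)
    (hs0 : 0 ≤ s) (hs : s ≤ K * (a + b)) : s ^ p ≤ (2*K)^p * (a^p + b^p) := by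
  have hmax : s ≤ (2*K) * max a b := by
    rcases le_total a b with hab | hab
    · rw [max_eq_right hab]; nlinarith
    · rw [max_eq_left hab]; nlinarith
  calc s ^ p ≤ ((2*K) * max a b) ^ p := Real.rpow_le_rpow hs0 hmax hp
    _ = (2*K)^p * (max a b)^p := Real.mul_rpow (by positivity) (le_max_of_le_left ha)
    _ ≤ (2*K)^p * (a^p + b^p) := by
        apply mul_le_mul_of_nonneg_left _ (Real.rpow_nonneg (by positivity) p)
        rcases le_total a b with hab | hab
        · rw [max_eq_right hab]
          have := Real.rpow_nonneg ha p
          linarith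
        · rw [max_eq_left hab]
          have := Real.rpow_nonneg hb p
          linarith

lemma Adiag_det (n : ℕ) (lam : ℝ) : (Adiag n lam).det = -lam := by
  rw [Adiag, Matrix.det_diagonal]
  rw [Finset.prod_ite_eq' Finset.univ (Fin.last n) (fun _ => -lam)]
  simp

lemma Adiag_mulVec_castSucc (n : ℕ) (lam : ℝ) (x : Fin (n+1) → ℝ) (i : Fin n) :
    (Adiag n lam).mulVec x (Fin.castSucc i) = x (Fin.castSucc i) := by
  rw [Adiag, Matrix.mulVec_diagonal, if_neg (Fin.castSucc_lt_last i).ne, one_mul]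

lemma Adiag_mulVec_last (n : ℕ) (lam : ℝ) (x : Fin (n+1) → ℝ) :
    (Adiag n lam).mulVec x (Fin.last n) = -lam * x (Fin.last n) := by
  rw [Adiag, Matrix.mulVec_diagonal, if_pos rfl]

set_option maxHeartbeats 2000000 in
/-- For `0 < μ < ν < 1`, `q := (1+ν)/(ν−μ)`, `p ∈ [1,∞)`, there is
`c > 0` depending only on `μ, ν, p` such that for every open `F ⊆ ℝ^{n-1}`, `h > 0`,
and `C¹` map `v` on `F × (−h, 0)`, the reflection
`v̂(x) := q·A_μ v(A_μ x) + (1−q)·A_ν v(A_ν x)` on `F × (0, h/ν)` satisfies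
`∫_{F × (0, h/ν)} ‖e(v̂)‖_F^p ≤ c ∫_{F × (−h, 0)} ‖e(v)‖_F^p`. -/
theorem stmt_13 (μ ν p : ℝ) (h0 : 0 < μ) (hμν : μ < ν) (h1 : ν < 1) (hp : 1 ≤ p)
    (q : ℝ) (hq : q = (1 + ν) / (ν - μ)) :
    ∃ c : ℝ, 0 < c ∧
      ∀ (n : ℕ) (F : Set (Fin n → ℝ)), IsOpen F →
        ∀ h : ℝ, 0 < h →
          ∀ S S' : Set (Fin (n + 1) → ℝ),
            S = {x | (fun i => x (Fin.castSucc i)) ∈ F ∧ x (Fin.last n) ∈ Set.Ioo (-h) 0} →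
            S' = {x | (fun i => x (Fin.castSucc i)) ∈ F ∧ x (Fin.last n) ∈ Set.Ioo 0 (h / ν)} →
            ∀ (v vhat : (Fin (n + 1) → ℝ) → (Fin (n + 1) → ℝ))
              (Dv Dvhat : (Fin (n + 1) → ℝ) → Matrix (Fin (n + 1)) (Fin (n + 1)) ℝ),
              (∀ x ∈ S, HasFDerivAt v (LinearMap.toContinuousLinearMap (Dv x).mulVecLin) x) →
              ContinuousOn Dv S →
              (∀ x ∈ S', vhat x = q • (Adiag n μ).mulVec (v ((Adiag n μ).mulVec x)) +
                (1 - q) • (Adiag n ν).mulVec (v ((Adiag n ν).mulVec x))) →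
              (∀ x ∈ S', HasFDerivAt vhat
                (LinearMap.toContinuousLinearMap (Dvhat x).mulVecLin) x) →
              ∫⁻ x in S', ENNReal.ofReal (frobNorm (symPart (Dvhat x)) ^ p) ≤
                ENNReal.ofReal c * ∫⁻ x in S, ENNReal.ofReal (frobNorm (symPart (Dv x)) ^ p) := by
  have hq0 : 0 < q := by
    rw [hq]; exact div_pos (by linarith) (by linarith)
  set K := max |q| |1 - q| with hKdef
  have hKpos : 0 < K := lt_of_lt_of_le (abs_pos.mpr (ne_of_gt hq0)) (le_max_left _ _)
  have hp0 : 0 ≤ p := le_trans zero_le_one hp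
  have hν0 : 0 < ν := h0.trans hμν
  have hinv : 0 < μ⁻¹ + ν⁻¹ := by
    have h2 := inv_pos.mpr h0
    have h3 := inv_pos.mpr hν0
    linarith
  refine ⟨(2*K)^p * (μ⁻¹ + ν⁻¹), mul_pos (Real.rpow_pos_of_pos (by linarith) p) hinv, ?_⟩
  intro n F hF h hh S S' hS hS' v vhat Dv Dvhat hv hDv hvhat hDvhat
  -- openness
  have hopenSets : ∀ (a b : ℝ), IsOpen {x : Fin (n+1) → ℝ |
      (fun i => x (Fin.castSucc i)) ∈ F ∧ x (Fin.last n) ∈ Set.Ioo a b} := by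
    intro a b
    have h1 : Continuous fun (x : Fin (n+1) → ℝ) => (fun i => x (Fin.castSucc i)) :=
      continuous_pi fun i => continuous_apply _
    have h2 : Continuous fun (x : Fin (n+1) → ℝ) => x (Fin.last n) := continuous_apply _
    exact (hF.preimage h1).inter (isOpen_Ioo.preimage h2)
  have hSopen : IsOpen S := by rw [hS]; exact hopenSets _ _
  have hS'open : IsOpen S' := by rw [hS']; exact hopenSets _ _
  -- the reflection maps S' into S
  have hmem : ∀ lam : ℝ, 0 < lam → lam ≤ ν → ∀ x ∈ S', (Adiag n lam).mulVec x ∈ S := by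
    intro lam hl hlν x hx
    rw [hS'] at hx
    rw [hS]
    obtain ⟨hx1, hx2, hx3⟩ := hx
    refine ⟨?_, ?_, ?_⟩
    · have : (fun i => (Adiag n lam).mulVec x (Fin.castSucc i)) =
          fun i => x (Fin.castSucc i) := funext fun i => Adiag_mulVec_castSucc n lam x i
      simpa [this] using hx1
    · rw [Adiag_mulVec_last]
      have hd : ν * (h / ν) = h := mul_div_cancel₀ h (ne_of_gt hν0)
      nlinarith
    · rw [Adiag_mulVec_last]
      nlinarith
  have hmemμ : ∀ x ∈ S', (Adiag n μ).mulVec x ∈ S := hmem μ h0 hμν.le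
  have hmemν : ∀ x ∈ S', (Adiag n ν).mulVec x ∈ S := hmem ν hν0 le_rfl
  -- derivative of the linear map
  have hAfd : ∀ (lam : ℝ) (z : Fin (n+1) → ℝ), HasFDerivAt
      (fun w : Fin (n+1) → ℝ => (Adiag n lam).mulVec w)
      (LinearMap.toContinuousLinearMap (Adiag n lam).mulVecLin) z :=
    fun lam z => (LinearMap.toContinuousLinearMap (Adiag n lam).mulVecLin).hasFDerivAt
  -- identification of Dvhat on S'
  have hDvhat_eq : ∀ x ∈ S', Dvhat x =
      q • (Adiag n μ * Dv ((Adiag n μ).mulVec x) * Adiag n μ) +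
      (1 - q) • (Adiag n ν * Dv ((Adiag n ν).mulVec x) * Adiag n ν) := by
    intro x hx
    have comp1 : ∀ lam : ℝ, (Adiag n lam).mulVec x ∈ S → HasFDerivAt
        (fun z => (Adiag n lam).mulVec (v ((Adiag n lam).mulVec z)))
        (LinearMap.toContinuousLinearMap
          ((Adiag n lam * Dv ((Adiag n lam).mulVec x) * Adiag n lam).mulVecLin)) x := by
      intro lam hm
      have h2 := (hv _ hm).comp x (hAfd lam x)
      have h4 := ((LinearMap.toContinuousLinearMap
        (Adiag n lam).mulVecLin).hasFDerivAt).comp x h2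
      have heq : LinearMap.toContinuousLinearMap
          ((Adiag n lam * Dv ((Adiag n lam).mulVec x) * Adiag n lam).mulVecLin) =
          (LinearMap.toContinuousLinearMap (Adiag n lam).mulVecLin).comp
            ((LinearMap.toContinuousLinearMap
              (Dv ((Adiag n lam).mulVec x)).mulVecLin).comp
              (LinearMap.toContinuousLinearMap (Adiag n lam).mulVecLin)) := by
        ext z
        simp [LinearMap.coe_toContinuousLinearMap', Matrix.mulVecLin_apply,
          Matrix.mulVec_mulVec]
      rw [heq]
      exact h4
    have h5 := (comp1 μ (hmemμ x hx)).const_smul q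
    have h6 := (comp1 ν (hmemν x hx)).const_smul (1 - q)
    have h7 := h5.add h6
    have hev : vhat =ᶠ[nhds x]
        (fun z => q • (Adiag n μ).mulVec (v ((Adiag n μ).mulVec z)) +
          (1 - q) • (Adiag n ν).mulVec (v ((Adiag n ν).mulVec z))) :=
      Filter.eventuallyEq_of_mem (hS'open.mem_nhds hx) (fun z hz => hvhat z hz)
    have h8 := h7.congr_of_eventuallyEq hev
    have h9 := (hDvhat x hx).unique h8
    apply matrix_eq_of_mulVec_eq
    intro z
    have h10 := DFunLike.congr_fun h9 z
    simpa [LinearMap.coe_toContinuousLinearMap', Matrix.mulVecLin_apply,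
      Matrix.add_mulVec, Matrix.smul_mulVec, Matrix.mul_assoc] using h10
  -- pointwise bound on the symmetric gradient
  have hfrob : ∀ x ∈ S', frobNorm (symPart (Dvhat x)) ≤
      K * (frobNorm (symPart (Dv ((Adiag n μ).mulVec x))) +
           frobNorm (symPart (Dv ((Adiag n ν).mulVec x)))) := by
    intro x hx
    rw [hDvhat_eq x hx, symPart_combo]
    refine le_trans (frobNorm_add_le _ _) ?_
    rw [frobNorm_smul, frobNorm_smul,
      symPart_conj _ _ (Adiag_transpose n μ), symPart_conj _ _ (Adiag_transpose n ν)]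
    have c1 := frobNorm_conj_le n μ h0.le (le_of_lt (hμν.trans h1)) (symPart (Dv ((Adiag n μ).mulVec x)))
    have c2 := frobNorm_conj_le n ν hν0.le h1.le (symPart (Dv ((Adiag n ν).mulVec x)))
    have k1 : |q| ≤ K := le_max_left _ _
    have k2 : |1 - q| ≤ K := le_max_right _ _
    have n1 := frobNorm_nonneg (Adiag n μ * symPart (Dv ((Adiag n μ).mulVec x)) * Adiag n μ)
    have n2 := frobNorm_nonneg (Adiag n ν * symPart (Dv ((Adiag n ν).mulVec x)) * Adiag n ν)
    have a1 := abs_nonneg q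
    have a2 := abs_nonneg (1 - q)
    nlinarith [frobNorm_nonneg (symPart (Dv ((Adiag n μ).mulVec x))),
      frobNorm_nonneg (symPart (Dv ((Adiag n ν).mulVec x)))]
  -- the indicator integrand
  set φ : (Fin (n+1) → ℝ) → ℝ≥0∞ :=
    fun y => ENNReal.ofReal (frobNorm (symPart (Dv y)) ^ p) with hφdef
  set g0 : (Fin (n+1) → ℝ) → ℝ≥0∞ := S.indicator φ with hg0def
  have hg0meas : AEMeasurable g0 volume := by
    rw [hg0def, aemeasurable_indicator_iff hSopen.measurableSet]
    have hcM : ∀ (i j : Fin (n+1)),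
        Continuous fun M : Matrix (Fin (n+1)) (Fin (n+1)) ℝ => M i j :=
      fun i j => (continuous_apply j).comp (continuous_apply i)
    have hfro : Continuous fun M : Matrix (Fin (n+1)) (Fin (n+1)) ℝ =>
        frobNorm (symPart M) := by
      apply Real.continuous_sqrt.comp
      apply continuous_finset_sum
      intro i _
      apply continuous_finset_sum
      intro j _
      have : Continuous fun M : Matrix (Fin (n+1)) (Fin (n+1)) ℝ => symPart M i j := by
        simp only [symPart, Matrix.smul_apply, Matrix.add_apply, Matrix.transpose_apply,
          smul_eq_mul]
        exact (continuous_const.mul ((hcM i j).add (hcM j i)))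
      exact this.pow 2
    have hout : Continuous fun M : Matrix (Fin (n+1)) (Fin (n+1)) ℝ =>
        ENNReal.ofReal (frobNorm (symPart M) ^ p) :=
      ENNReal.continuous_ofReal.comp ((Real.continuous_rpow_const hp0).comp hfro)
    exact (hout.comp_continuousOn hDv).aemeasurable hSopen.measurableSet
  -- continuity/measurability of the linear maps
  have hAcont : ∀ lam : ℝ, Continuous fun x : Fin (n+1) → ℝ => (Adiag n lam).mulVec x :=
    fun lam => (LinearMap.toContinuousLinearMap (Adiag n lam).mulVecLin).continuous
  -- change of variables
  have hqmp : ∀ lam : ℝ, 0 < lam →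
      Measure.map (fun x : Fin (n+1) → ℝ => (Adiag n lam).mulVec x) volume
        = ENNReal.ofReal lam⁻¹ • volume := by
    intro lam hl
    have hdet : LinearMap.det ((Adiag n lam).mulVecLin) = -lam := by
      rw [← Matrix.toLin'_apply', LinearMap.det_toLin', Adiag_det]
    have hne : LinearMap.det ((Adiag n lam).mulVecLin) ≠ 0 := by
      rw [hdet]; exact neg_ne_zero.mpr (ne_of_gt hl)
    have := Real.map_linearMap_volume_pi_eq_smul_volume_pi hne
    rw [hdet] at this
    have habs : |(-lam)⁻¹| = lam⁻¹ := by
      rw [abs_inv, abs_neg, abs_of_pos hl]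
    rw [habs] at this
    exact this
  have hchange : ∀ lam : ℝ, 0 < lam →
      ∫⁻ x, g0 ((Adiag n lam).mulVec x) = ENNReal.ofReal lam⁻¹ * ∫⁻ y, g0 y := by
    intro lam hl
    have hmm : AEMeasurable g0
        (Measure.map (fun x : Fin (n+1) → ℝ => (Adiag n lam).mulVec x) volume) := by
      rw [hqmp lam hl]; exact hg0meas.smul_measure _
    rw [← lintegral_map' hmm ((hAcont lam).measurable.aemeasurable), hqmp lam hl,
      lintegral_smul_measure, smul_eq_mul]
  have hcompmeas : ∀ lam : ℝ, 0 < lam →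
      AEMeasurable (fun x => g0 ((Adiag n lam).mulVec x)) volume := by
    intro lam hl
    have hqm : Measure.QuasiMeasurePreserving
        (fun x : Fin (n+1) → ℝ => (Adiag n lam).mulVec x) volume volume := by
      refine ⟨(hAcont lam).measurable, ?_⟩
      rw [hqmp lam hl]
      exact Measure.smul_absolutelyContinuous
    exact hg0meas.comp_quasiMeasurePreserving hqm
  -- pointwise ENNReal bound on S'
  have hpt : ∀ x ∈ S', ENNReal.ofReal (frobNorm (symPart (Dvhat x)) ^ p) ≤
      ENNReal.ofReal ((2*K)^p) *
        (g0 ((Adiag n μ).mulVec x) + g0 ((Adiag n ν).mulVec x)) := by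
    intro x hx
    have hibμ : g0 ((Adiag n μ).mulVec x) =
        ENNReal.ofReal (frobNorm (symPart (Dv ((Adiag n μ).mulVec x))) ^ p) := by
      rw [hg0def, Set.indicator_of_mem (hmemμ x hx)]
    have hibν : g0 ((Adiag n ν).mulVec x) =
        ENNReal.ofReal (frobNorm (symPart (Dv ((Adiag n ν).mulVec x))) ^ p) := by
      rw [hg0def, Set.indicator_of_mem (hmemν x hx)]
    calc ENNReal.ofReal (frobNorm (symPart (Dvhat x)) ^ p)
        ≤ ENNReal.ofReal ((2*K)^p *
            (frobNorm (symPart (Dv ((Adiag n μ).mulVec x))) ^ p +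
             frobNorm (symPart (Dv ((Adiag n ν).mulVec x))) ^ p)) :=
          ENNReal.ofReal_le_ofReal (key_rpow hp0 hKpos.le (frobNorm_nonneg _)
            (frobNorm_nonneg _) (frobNorm_nonneg _) (hfrob x hx))
      _ = ENNReal.ofReal ((2*K)^p) *
            (g0 ((Adiag n μ).mulVec x) + g0 ((Adiag n ν).mulVec x)) := by
          rw [ENNReal.ofReal_mul (Real.rpow_nonneg (by linarith) p),
            ENNReal.ofReal_add (Real.rpow_nonneg (frobNorm_nonneg _) p)
              (Real.rpow_nonneg (frobNorm_nonneg _) p), hibμ, hibν]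
  -- put it together
  have hI : ∫⁻ y, g0 y = ∫⁻ x in S, φ x := by
    rw [hg0def]; exact lintegral_indicator hSopen.measurableSet φ
  calc ∫⁻ x in S', ENNReal.ofReal (frobNorm (symPart (Dvhat x)) ^ p)
      ≤ ∫⁻ x in S', ENNReal.ofReal ((2*K)^p) *
          (g0 ((Adiag n μ).mulVec x) + g0 ((Adiag n ν).mulVec x)) := by
        apply lintegral_mono_ae
        rw [ae_restrict_iff' hS'open.measurableSet]
        exact ae_of_all _ hpt
    _ = ENNReal.ofReal ((2*K)^p) *
          ∫⁻ x in S', (g0 ((Adiag n μ).mulVec x) + g0 ((Adiag n ν).mulVec x)) :=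
        lintegral_const_mul' _ _ ENNReal.ofReal_ne_top
    _ = ENNReal.ofReal ((2*K)^p) *
          ((∫⁻ x in S', g0 ((Adiag n μ).mulVec x)) +
           (∫⁻ x in S', g0 ((Adiag n ν).mulVec x))) := by
        rw [lintegral_add_left' ((hcompmeas μ h0).restrict) _]
    _ ≤ ENNReal.ofReal ((2*K)^p) *
          ((∫⁻ x, g0 ((Adiag n μ).mulVec x)) + (∫⁻ x, g0 ((Adiag n ν).mulVec x))) := by
        gcongr
        · exact Measure.restrict_le_self
        · exact Measure.restrict_le_self
    _ = ENNReal.ofReal ((2*K)^p) *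
          ((ENNReal.ofReal μ⁻¹ + ENNReal.ofReal ν⁻¹) * ∫⁻ x in S, φ x) := by
        rw [hchange μ h0, hchange ν hν0, hI]; ring
    _ = ENNReal.ofReal ((2*K)^p * (μ⁻¹ + ν⁻¹)) * ∫⁻ x in S, φ x := by
        rw [ENNReal.ofReal_mul (Real.rpow_nonneg (by linarith) p),
          ENNReal.ofReal_add (inv_nonneg.mpr h0.le) (inv_nonneg.mpr hν0.le), mul_assoc]
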